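/- Let Sh denote the quotient of {±1} × A_f^× by the action of ℚ^× given by q·(ε, l) = (sign(q)·ε, q·l). Then the map sending u ∈ Ẑ^× to the class of (1, u) in Sh is a bijection from Ẑ^× onto Sh. -/

import Mathlib

open IsDedekindDomain IsDedekindDomain.HeightOneSpectrum

noncomputable section

/-- The finite adele ring of ℚ. -/
abbrev Af : Type := FiniteAdeleRing ℤ ℚ

/-- A finite adele is integral if all its components are integral, i.e. it lies in Ẑ. -/
def IsIntegralAdele (x : Af) : Prop :=
  ∀ v : HeightOneSpectrum ℤ, x v ∈ v.adicCompletionIntegers ℚ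

/-- Ẑ^×, the subgroup of A_f^× of ideles that are integral with integral inverse. -/
def zhatUnits : Subgroup Afˣ where
  carrier := {u | IsIntegralAdele (u : Af) ∧ IsIntegralAdele ((u⁻¹ : Afˣ) : Af)}
  one_mem' := ⟨fun v => one_mem _, fun v => one_mem _⟩
  mul_mem' := by
    rintro a b ⟨ha, ha'⟩ ⟨hb, hb'⟩
    exact ⟨fun v => mul_mem (ha v) (hb v), by
      rw [mul_inv_rev]; exact fun v => mul_mem (hb' v) (ha' v)⟩
  inv_mem' := by
    rintro a ⟨ha, ha'⟩
    exact ⟨ha', by rw [inv_inv]; exact ha⟩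

/-- The diagonal embedding of ℚ^× into the finite ideles. -/
def diagQ : ℚˣ →* Afˣ := Units.map (algebraMap ℚ Af).toMonoidHom

/-- The sign of a nonzero rational, as an element of {±1} = ℤˣ. -/
def signQ (q : ℚˣ) : ℤˣ := if 0 < (q : ℚ) then 1 else -1

/-- The action of ℚ^× on {±1} × A_f^×: q·(ε, l) = (sign(q)·ε, q·l). -/
def relSh : (ℤˣ × Afˣ) → (ℤˣ × Afˣ) → Prop := fun p p' =>
  ∃ q : ℚˣ, p'.1 = signQ q * p.1 ∧ p'.2 = diagQ q * p.2

/-- Sh(𝔾_m, {±1}) = ℚ^×\({±1} × A_f^×). -/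
def Sh : Type := Quot relSh

/-! Since ℤ is a principal ideal domain, the valuations of any idele `x` are those of some
`q ∈ ℚ^×`, and `q` may be taken of sign `ε`; then `(ε, x) = q · (1, q⁻¹ x)` with `q⁻¹ x ∈ Ẑ^×`.
Uniqueness: a rational number of valuation `1` at every prime is a unit of `ℤ`, i.e. `±1`,
and the sign component rules out `-1`. -/

namespace IsDedekindDomain

open FiniteAdeleRing WithZero

variable {R K : Type*} [CommRing R] [IsDedekindDomain R] [Field K] [Algebra R K]
  [IsFractionRing R K]

namespace FiniteAdeleRing

lemma units_inv_apply (u : 𝔸ᶠ[R, K]ˣ) (v : HeightOneSpectrum R) :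
    ((u⁻¹ : 𝔸ᶠ[R, K]ˣ) : 𝔸ᶠ[R, K]) v = ((u : 𝔸ᶠ[R, K]) v)⁻¹ :=
  (eq_inv_of_mul_eq_one_right (congrArg (· v) u.mul_inv :))

lemma units_apply_ne_zero (u : 𝔸ᶠ[R, K]ˣ) (v : HeightOneSpectrum R) :
    (u : 𝔸ᶠ[R, K]) v ≠ 0 :=
  left_ne_zero_of_mul_eq_one (congrArg (· v) u.mul_inv :)

lemma valued_algebraMap_apply (k : K) (v : HeightOneSpectrum R) :
    Valued.v (algebraMap K 𝔸ᶠ[R, K] k v) = v.valuation K k :=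
  v.valuedAdicCompletion_eq_valuation' k

lemma valued_mul_apply (x y : 𝔸ᶠ[R, K]) (v : HeightOneSpectrum R) :
    Valued.v ((x * y) v) = Valued.v (x v) * Valued.v (y v) :=
  Valuation.map_mul _ _ _

lemma valued_units_inv_apply (u : 𝔸ᶠ[R, K]ˣ) (v : HeightOneSpectrum R) :
    Valued.v (((u⁻¹ : 𝔸ᶠ[R, K]ˣ) : 𝔸ᶠ[R, K]) v) = (Valued.v ((u : 𝔸ᶠ[R, K]) v))⁻¹ := by
  rw [units_inv_apply, map_inv₀]

end FiniteAdeleRing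

namespace HeightOneSpectrum

lemma exists_units_algebraMap_eq_of_valuation_eq_one {x : K} (hx : x ≠ 0)
    (h : ∀ v : HeightOneSpectrum R, v.valuation K x = 1) :
    ∃ r : Rˣ, algebraMap R K r = x := by
  obtain ⟨a, ha⟩ := mem_integers_of_valuation_le_one K x fun v ↦ (h v).le
  obtain ⟨b, hb⟩ := mem_integers_of_valuation_le_one K x⁻¹ fun v ↦ by rw [map_inv₀, h v, inv_one]
  have hab : a * b = 1 := IsFractionRing.injective R K <| by
    rw [map_mul, ha, hb, mul_inv_cancel₀ hx, map_one]
  exact ⟨⟨a, b, hab, mul_comm b a ▸ hab⟩, ha⟩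

variable [IsPrincipalIdealRing R]

lemma valuation_generator_self (v : HeightOneSpectrum R) :
    v.valuation K (algebraMap R K (Submodule.IsPrincipal.generator v.asIdeal)) = exp (-1) := by
  rw [valuation_of_algebraMap]
  refine v.intValuation_singleton ?_ (Ideal.span_singleton_generator v.asIdeal).symm
  exact (Submodule.IsPrincipal.eq_bot_iff_generator_eq_zero _).not.mp v.ne_bot

lemma valuation_generator_of_ne {v w : HeightOneSpectrum R} (hvw : v ≠ w) :
    w.valuation K (algebraMap R K (Submodule.IsPrincipal.generator v.asIdeal)) = 1 := by
  rw [valuation_of_algebraMap, intValuation_eq_one_iff]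
  intro hmem
  have hle : v.asIdeal ≤ w.asIdeal := by
    rw [← Ideal.span_singleton_generator v.asIdeal, Ideal.span_le, Set.singleton_subset_iff]
    exact hmem
  exact hvw (HeightOneSpectrum.ext (v.isMaximal.eq_of_le w.isPrime.ne_top hle))

end HeightOneSpectrum

namespace FiniteAdeleRing

variable [IsPrincipalIdealRing R]

theorem exists_valuation_eq_valued (a : 𝔸ᶠ[R, K]ˣ) :
    ∃ k : Kˣ, ∀ v, v.valuation K k = Valued.v ((a : 𝔸ᶠ[R, K]) v) := by
  classical
  obtain ⟨hne, hfin⟩ := isUnit_iff.mp a.isUnit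
  let π (v : HeightOneSpectrum R) : K := algebraMap R K (Submodule.IsPrincipal.generator v.asIdeal)
  let n (v : HeightOneSpectrum R) : ℤ := -log (Valued.v ((a : 𝔸ᶠ[R, K]) v))
  have hπ (v : HeightOneSpectrum R) : π v ≠ 0 :=
    (Valuation.ne_zero_iff _).mp (by rw [v.valuation_generator_self]; exact exp_ne_zero)
  refine ⟨Units.mk0 (∏ v ∈ (Filter.eventually_cofinite.mp hfin).toFinset, π v ^ n v)
    (Finset.prod_ne_zero_iff.mpr fun v _ ↦ zpow_ne_zero _ (hπ v)), fun w ↦ ?_⟩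
  rw [Units.val_mk0, map_prod, Finset.prod_eq_single w]
  · rw [map_zpow₀, HeightOneSpectrum.valuation_generator_self, ← exp_zsmul, smul_eq_mul,
      mul_neg_one, neg_neg, exp_log ((Valued.v.ne_zero_iff).mpr (hne w))]
  · intro v _ hvw
    rw [map_zpow₀, HeightOneSpectrum.valuation_generator_of_ne hvw, one_zpow]
  · intro hw
    rw [Set.Finite.mem_toFinset, Set.mem_ofPred_eq, not_not] at hw
    simp [n, hw]

end FiniteAdeleRing

end IsDedekindDomain

open IsDedekindDomain.FiniteAdeleRing

lemma mem_zhatUnits_iff {u : Afˣ} :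
    u ∈ zhatUnits ↔ ∀ v : HeightOneSpectrum ℤ, Valued.v ((u : Af) v) = 1 := by
  change (∀ v, _) ∧ (∀ v, _) ↔ _
  rw [← forall_and]
  refine forall_congr' fun v ↦ ?_
  rw [mem_adicCompletionIntegers, mem_adicCompletionIntegers, valued_units_inv_apply,
    inv_le_one₀ (zero_lt_iff.mpr ((Valuation.ne_zero_iff _).mpr (units_apply_ne_zero u v))),
    le_antisymm_iff]

lemma valued_diagQ_apply (q : ℚˣ) (v : HeightOneSpectrum ℤ) :
    Valued.v ((diagQ q : Af) v) = v.valuation ℚ q :=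
  valued_algebraMap_apply _ v

lemma signQ_one : signQ 1 = 1 := by simp [signQ]

lemma signQ_neg (q : ℚˣ) : signQ (-q) = -signQ q := by
  rcases lt_or_gt_of_ne q.ne_zero with h | h <;>
    simp [signQ, h, h.not_gt]

lemma signQ_mul (a b : ℚˣ) : signQ (a * b) = signQ a * signQ b := by
  rcases lt_or_gt_of_ne a.ne_zero with ha | ha <;> rcases lt_or_gt_of_ne b.ne_zero with hb | hb <;>
    simp [signQ, mul_pos_iff, ha, hb, ha.not_gt, hb.not_gt]

lemma relSh_equivalence : Equivalence relSh where
  refl _ := ⟨1, by simp [signQ_one], by simp⟩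
  symm := by
    rintro _ _ ⟨q, h₁, h₂⟩
    refine ⟨q⁻¹, ?_, ?_⟩
    · rw [h₁, ← mul_assoc, ← signQ_mul, inv_mul_cancel, signQ_one, one_mul]
    · rw [h₂, map_inv, inv_mul_cancel_left]
  trans := by
    rintro _ _ _ ⟨q, h₁, h₂⟩ ⟨q', h₁', h₂'⟩
    exact ⟨q' * q, by rw [h₁', h₁, signQ_mul, mul_assoc], by rw [h₂', h₂, map_mul, mul_assoc]⟩

lemma eq_one_of_signQ_eq_one_of_valuation_eq_one {q : ℚˣ} (hsign : signQ q = 1)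
    (hval : ∀ v : HeightOneSpectrum ℤ, v.valuation ℚ q = 1) : q = 1 := by
  obtain ⟨r, hr⟩ := HeightOneSpectrum.exists_units_algebraMap_eq_of_valuation_eq_one q.ne_zero hval
  rcases Int.units_eq_one_or r with rfl | rfl
  · exact Units.ext (by simpa using hr.symm)
  · have hq : (q : ℚ) = -1 := by simpa using hr.symm
    simp [signQ, hq] at hsign

lemma exists_signQ_eq_and_valuation_eq (ε : ℤˣ) (x : Afˣ) :
    ∃ q : ℚˣ, signQ q = ε ∧ ∀ v : HeightOneSpectrum ℤ, v.valuation ℚ q = Valued.v ((x : Af) v) := by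
  obtain ⟨k, hk⟩ := exists_valuation_eq_valued x
  by_cases h : signQ k = ε
  · exact ⟨k, h, hk⟩
  · refine ⟨-k, by rw [signQ_neg, Int.units_ne_iff_eq_neg.mp h, neg_neg], fun v ↦ ?_⟩
    rw [Units.val_neg, Valuation.map_neg, hk]

/-- The map u ↦ [1, u] is a bijection from Ẑ^× onto Sh(𝔾_m, {±1}). -/
theorem zhatUnits_equiv_Sh :
    Function.Bijective (fun u : zhatUnits => Quot.mk relSh (1, (u : Afˣ))) := by
  refine ⟨fun a b hab ↦ ?_, ?_⟩
  · obtain ⟨q, hsign, hmul⟩ := relSh_equivalence.eqvGen_iff.mp (Quot.eqvGen_exact hab)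
    have hval (v : HeightOneSpectrum ℤ) : v.valuation ℚ q = 1 := by
      have := congrArg (fun z : Afˣ ↦ Valued.v ((z : Af) v)) hmul
      simp only [Units.val_mul, valued_mul_apply, valued_diagQ_apply, mem_zhatUnits_iff.mp a.2 v,
        mem_zhatUnits_iff.mp b.2 v, mul_one] at this
      exact this.symm
    have hq : q = 1 := eq_one_of_signQ_eq_one_of_valuation_eq_one (by simpa using hsign.symm) hval
    exact Subtype.ext (by simpa [hq] using hmul.symm)
  · rintro ⟨ε, x⟩
    obtain ⟨q, hsign, hval⟩ := exists_signQ_eq_and_valuation_eq ε x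
    have hu : (diagQ q)⁻¹ * x ∈ zhatUnits := mem_zhatUnits_iff.mpr fun v ↦ by
      rw [Units.val_mul, valued_mul_apply, ← map_inv, valued_diagQ_apply, Units.val_inv_eq_inv_val,
        map_inv₀, hval, inv_mul_cancel₀ ((Valuation.ne_zero_iff _).mpr (units_apply_ne_zero x v))]
    exact ⟨⟨_, hu⟩, Quot.sound ⟨q, by simp [hsign], by simp⟩⟩
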